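/- The road R = {(x,y,0) ∈ ℝ³ : (x−1)² + (y−1)² = 4/9, x ≤ 1, y ≤ 1} is cone-friendly: the radial projection p ↦ p/‖p‖ is injective on R; equivalently, every ray emanating from the origin intersects R in at most one point. -/

import Mathlib

/-!
Points of the road have positive `x` and `y`, so scaling one by `t ≥ 1` can only decrease
`u = 1 - x` and `v = 1 - y`, which are nonnegative on the road. Since `u² + v² = (2/3)²` there,
neither actually decreases, so each ray meets the road at most once; radial injectivity follows
because the road avoids the origin.
-/

/-- The road `R = {(x,y,0) : (x-1)² + (y-1)² = 4/9, x ≤ 1, y ≤ 1}`,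
as a subset of Euclidean `ℝ³`. -/
def road : Set (EuclideanSpace ℝ (Fin 3)) :=
  {p | (p 0 - 1)^2 + (p 1 - 1)^2 = (2/3)^2 ∧ p 0 ≤ 1 ∧ p 1 ≤ 1 ∧ p 2 = 0}

open Set

lemma eq_and_eq_of_le_of_sq_add_sq_eq {u v u' v' : ℝ} (hu' : 0 ≤ u') (hv' : 0 ≤ v')
    (hu : u' ≤ u) (hv : v' ≤ v) (h : u ^ 2 + v ^ 2 = u' ^ 2 + v' ^ 2) : u = u' ∧ v = v' := by
  have hu2 : u' ^ 2 ≤ u ^ 2 := pow_le_pow_left₀ hu' hu 2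
  have hv2 : v' ^ 2 ≤ v ^ 2 := pow_le_pow_left₀ hv' hv 2
  constructor
  · exact (pow_left_inj₀ (hu'.trans hu) hu' two_ne_zero).1 (by linarith)
  · exact (pow_left_inj₀ (hv'.trans hv) hv' two_ne_zero).1 (by linarith)

lemma injOn_inv_norm_smul_of_eq_of_pos_smul {E : Type*} [NormedAddCommGroup E]
    [NormedSpace ℝ E] {S : Set E} (h0 : (0 : E) ∉ S)
    (hS : ∀ p ∈ S, ∀ q ∈ S, ∀ t : ℝ, 0 < t → q = t • p → q = p) :
    InjOn (fun p : E => ‖p‖⁻¹ • p) S := by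
  intro p hp q hq hpq
  have hp0 : p ≠ 0 := ne_of_mem_of_not_mem hp h0
  have hq0 : q ≠ 0 := ne_of_mem_of_not_mem hq h0
  obtain ⟨t, ht, rfl⟩ :=
    ((sameRay_iff_inv_norm_smul_eq_of_ne hp0 hq0).2 hpq).exists_pos_left hp0 hq0
  exact (hS p hp _ hq t ht rfl).symm

lemma pos_of_mem_road {p : EuclideanSpace ℝ (Fin 3)} (hp : p ∈ road) : 0 < p 0 ∧ 0 < p 1 := by
  obtain ⟨hc, hx, hy, -⟩ := hp
  constructor <;> nlinarith [sq_nonneg (p 0 - 1), sq_nonneg (p 1 - 1)]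

lemma zero_notMem_road : (0 : EuclideanSpace ℝ (Fin 3)) ∉ road := fun h =>
  (pos_of_mem_road h).1.ne' rfl

lemma eq_of_mem_road_of_eq_smul_of_one_le {p q : EuclideanSpace ℝ (Fin 3)} (hp : p ∈ road)
    (hq : q ∈ road) {t : ℝ} (ht : 1 ≤ t) (hqp : q = t • p) : q = p := by
  obtain ⟨hpc, hpx, hpy, hpz⟩ := hp
  obtain ⟨hqc, hqx, hqy, hqz⟩ := hq
  obtain ⟨hp0, hp1⟩ := pos_of_mem_road ⟨hpc, hpx, hpy, hpz⟩
  have hq0 : q 0 = t * p 0 := by rw [hqp]; rfl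
  have hq1 : q 1 = t * p 1 := by rw [hqp]; rfl
  obtain ⟨h0, h1⟩ := eq_and_eq_of_le_of_sq_add_sq_eq (u := 1 - p 0) (v := 1 - p 1)
    (sub_nonneg.2 hqx) (sub_nonneg.2 hqy) (by nlinarith) (by nlinarith)
    (by nlinarith)
  ext i
  fin_cases i
  · exact (sub_right_injective h0).symm
  · exact (sub_right_injective h1).symm
  · exact hqz.trans hpz.symm

lemma eq_of_mem_road_of_eq_smul {p q : EuclideanSpace ℝ (Fin 3)} (hp : p ∈ road)
    (hq : q ∈ road) {t : ℝ} (ht : 0 < t) (hqp : q = t • p) : q = p := by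
  rcases le_or_gt 1 t with h1 | h1
  · exact eq_of_mem_road_of_eq_smul_of_one_le hp hq h1 hqp
  · refine (eq_of_mem_road_of_eq_smul_of_one_le hq hp (one_le_inv₀ ht |>.2 h1.le) ?_).symm
    rw [hqp, inv_smul_smul₀ ht.ne']

/-- the road `R` is cone-friendly: the radial projection
`p ↦ p/‖p‖` is injective on `R`; equivalently, every ray emanating from the
origin intersects `R` in at most one point. -/
theorem road_coneFriendly :
    Set.InjOn (fun p : EuclideanSpace ℝ (Fin 3) => ‖p‖⁻¹ • p) road ∧
    ∀ p ∈ road, ∀ q ∈ road, ∀ t : ℝ, 0 < t → q = t • p → q = p := by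
  have hray : ∀ p ∈ road, ∀ q ∈ road, ∀ t : ℝ, 0 < t → q = t • p → q = p :=
    fun _ hp _ hq _ => eq_of_mem_road_of_eq_smul hp hq
  exact ⟨injOn_inv_norm_smul_of_eq_of_pos_smul zero_notMem_road hray, hray⟩
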